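/- Let h, h' ∈ ℕ, W̃ ∈ ℝ^{h'×h} with spectral norm ‖W̃‖₂ ≤ 1, b̃ ∈ ℝ^{h'}, and τ ∈ [0,2]. Define Φ̃ : ℝ^h → ℝ^h by Φ̃(y) = y − τ W̃ᵀ ReLU(W̃y + b̃), and define Φ : ℝ^{h+3} → ℝ^{h+3} by Φ(x) = (max{x₁,x₂}, min{x₁,x₂}, x₃, Φ̃(x₄,…,x_{h+3})). Then there exist W ∈ ℝ^{(h'+3)×(h+3)} with ‖W‖₂ ≤ 1 and b ∈ ℝ^{h'+3} such that Φ(x) = x − 2 Wᵀ ReLU(Wx + b) for all x ∈ ℝ^{h+3}. In particular, the set Ẽ_{h,σ} is a subset of E_{h+3,σ} for σ = ReLU. -/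

import Mathlib

open scoped BigOperators

noncomputable section

def relu (t : ℝ) : ℝ := max t 0

def entrywise {n : ℕ} (σ : ℝ → ℝ) (x : EuclideanSpace ℝ (Fin n)) : EuclideanSpace ℝ (Fin n) :=
  WithLp.toLp 2 (fun i => σ (x i))

def matVec {k h : ℕ} (W : Matrix (Fin k) (Fin h) ℝ) (x : EuclideanSpace ℝ (Fin h)) :
    EuclideanSpace ℝ (Fin k) :=
  Matrix.toEuclideanLin W x

/-- Spectral norm of a real matrix, as the operator norm between Euclidean spaces. -/
def specNorm {k h : ℕ} (W : Matrix (Fin k) (Fin h) ℝ) : ℝ :=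
  ‖LinearMap.toContinuousLinearMap (Matrix.toEuclideanLin W)‖

/-- Membership in `E_{h,σ}` with `σ = ReLU`. -/
def IsEulerStep {h : ℕ} (Φ : EuclideanSpace ℝ (Fin h) → EuclideanSpace ℝ (Fin h)) : Prop :=
  ∃ (k : ℕ) (W : Matrix (Fin k) (Fin h) ℝ) (b : EuclideanSpace ℝ (Fin k)) (τ : ℝ),
    0 ≤ τ ∧ τ ≤ 2 ∧ specNorm W ≤ 1 ∧
    ∀ x, Φ x = x - τ • matVec W.transpose (entrywise relu (matVec W x + b))

def compChain {α : Type*} : (L : ℕ) → (Fin L → α → α) → α → α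
  | 0, _, x => x
  | L + 1, Φ, x => Φ (Fin.last L) (compChain L (fun i => Φ i.castSucc) x)

/-- Membership in `G_{d,σ}(X,ℝ)` with `σ = ReLU`. -/
def InG {d : ℕ} (X : Set (EuclideanSpace ℝ (Fin d))) (g : EuclideanSpace ℝ (Fin d) → ℝ) : Prop :=
  LipschitzOnWith 1 g X ∧
  ∃ (h L : ℕ) (Qhat : Matrix (Fin h) (Fin d) ℝ) (qhat : EuclideanSpace ℝ (Fin h))
    (Φ : Fin L → (EuclideanSpace ℝ (Fin h) → EuclideanSpace ℝ (Fin h)))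
    (v : EuclideanSpace ℝ (Fin h)),
    (∀ ℓ, IsEulerStep (Φ ℓ)) ∧ ‖v‖ = 1 ∧
    ∀ x ∈ X, g x = ∑ i, v i * compChain L Φ (matVec Qhat x + qhat) i

def concatE {h₁ h₂ : ℕ} (u : EuclideanSpace ℝ (Fin h₁)) (v : EuclideanSpace ℝ (Fin h₂)) :
    EuclideanSpace ℝ (Fin (h₁ + h₂)) :=
  WithLp.toLp 2 (Fin.append (fun i => u i) (fun i => v i))

/-- The residual blocks in `Ẽ_{h,σ}`: `(max{x₁,x₂}, min{x₁,x₂}, x₃, Φ'(x₄,…,x_{h+3}))`. -/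
def tildeLayer {h : ℕ} (Φ' : EuclideanSpace ℝ (Fin h) → EuclideanSpace ℝ (Fin h))
    (x : EuclideanSpace ℝ (Fin (h + 3))) : EuclideanSpace ℝ (Fin (h + 3)) :=
  WithLp.toLp 2 fun j =>
    if _h0 : (j : ℕ) = 0 then max (x ⟨0, by omega⟩) (x ⟨1, by omega⟩)
    else if _h1 : (j : ℕ) = 1 then min (x ⟨0, by omega⟩) (x ⟨1, by omega⟩)
    else if _h2 : (j : ℕ) = 2 then x ⟨2, by omega⟩
    else Φ' (WithLp.toLp 2 fun i => x ⟨(i : ℕ) + 3, by have := i.isLt; omega⟩)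
      ⟨(j : ℕ) - 3, by have := j.isLt; omega⟩

/-- Membership in `Ẽ_{h,σ}` with `σ = ReLU`. -/
def IsTildeLayer {h : ℕ} (Φ : EuclideanSpace ℝ (Fin (h + 3)) → EuclideanSpace ℝ (Fin (h + 3))) :
    Prop :=
  ∃ Φ', IsEulerStep Φ' ∧ ∀ x, Φ x = tildeLayer Φ' x

def emb0 {n : ℕ} : Fin 1 → Fin (n + 3) := fun _ => ⟨0, by omega⟩
def emb1 {n : ℕ} : Fin 1 → Fin (n + 3) := fun _ => ⟨1, by omega⟩
def emb2 {n : ℕ} : Fin 1 → Fin (n + 3) := fun _ => ⟨2, by omega⟩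
def embT {n : ℕ} : Fin n → Fin (n + 3) := fun i => ⟨(i : ℕ) + 3, by have := i.isLt; omega⟩

/-- Membership in `R_{d,m}` for `m = (1,1,1,n)`: each block row of the matrix has spectral
norm at most `1`. -/
def memRm {d n : ℕ} (Q : Matrix (Fin (n + 3)) (Fin d) ℝ) : Prop :=
  specNorm (Q.submatrix emb0 id) ≤ 1 ∧ specNorm (Q.submatrix emb1 id) ≤ 1 ∧
    specNorm (Q.submatrix emb2 id) ≤ 1 ∧ specNorm (Q.submatrix embT id) ≤ 1

def rowBlockSum {n r : ℕ} (A : Matrix (Fin (n + 3)) (Fin (n + 3)) ℝ)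
    (e : Fin r → Fin (n + 3)) : ℝ :=
  specNorm (A.submatrix e emb0) + specNorm (A.submatrix e emb1) +
    specNorm (A.submatrix e emb2) + specNorm (A.submatrix e embT)

/-- Membership in `L_m` for `m = (1,1,1,n)`: for each block row, the sum of the spectral
norms of the blocks is at most `1`. -/
def memLm {n : ℕ} (A : Matrix (Fin (n + 3)) (Fin (n + 3)) ℝ) : Prop :=
  rowBlockSum A emb0 ≤ 1 ∧ rowBlockSum A emb1 ≤ 1 ∧
    rowBlockSum A emb2 ≤ 1 ∧ rowBlockSum A embT ≤ 1

/-- `Φ_{L+1} ∘ A_L ∘ ⋯ ∘ Φ₂ ∘ A₁ ∘ Φ₁`, the alternating composition. -/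
def altChain {α : Type*} : (L : ℕ) → (Fin (L + 1) → α → α) → (Fin L → α → α) → α → α
  | 0, Φ, _, x => Φ 0 x
  | L + 1, Φ, A, x =>
      Φ (Fin.last (L + 1)) (A (Fin.last L)
        (altChain L (fun i => Φ i.castSucc) (fun i => A i.castSucc) x))

/-- Membership in the fixed-width class `tilde-G_{d,σ,n+3}(X,ℝ)` with `σ = ReLU`. -/
def InTildeG {d n : ℕ} (X : Set (EuclideanSpace ℝ (Fin d)))
    (g : EuclideanSpace ℝ (Fin d) → ℝ) : Prop :=
  ∃ (L : ℕ) (Qhat : Matrix (Fin (n + 3)) (Fin d) ℝ) (qhat : EuclideanSpace ℝ (Fin (n + 3)))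
    (Φ : Fin (L + 1) → (EuclideanSpace ℝ (Fin (n + 3)) → EuclideanSpace ℝ (Fin (n + 3))))
    (Ahat : Fin L → Matrix (Fin (n + 3)) (Fin (n + 3)) ℝ)
    (ahat : Fin L → EuclideanSpace ℝ (Fin (n + 3)))
    (v : EuclideanSpace ℝ (Fin (n + 3))),
    memRm Qhat ∧ (∀ ℓ, IsTildeLayer (Φ ℓ)) ∧ (∀ ℓ, memLm (Ahat ℓ)) ∧ (∑ i, |v i|) ≤ 1 ∧
    ∀ x ∈ X,
      g x = ∑ i, v i *
        altChain L Φ (fun ℓ u => matVec (Ahat ℓ) u + ahat ℓ) (matVec Qhat x + qhat) i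

end

/-! The sorting block is itself a ReLU residual step: for the row `w = (e₂ - e₁)/√2`, the map
`x ↦ x - 2 w ReLU(⟨w, x⟩)` replaces `(x₁, x₂)` by
`(x₁ + ReLU(x₂ - x₁), x₂ - ReLU(x₂ - x₁)) = (max, min)`.
By positive homogeneity of ReLU, scaling `W̃, b̃` by `√(τ/2) ≤ 1` turns the step size `τ` into
`2`. Stacking `w` (padded by two zero rows) block-diagonally with `√(τ/2) W̃` gives `W`, whose
spectral norm is at most `max(‖w‖, ‖√(τ/2) W̃‖₂) ≤ 1`. -/

open Matrix

lemma relu_mul_of_nonneg {a : ℝ} (ha : 0 ≤ a) (t : ℝ) : relu (a * t) = a * relu t := by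
  rw [relu, relu, mul_max_of_nonneg _ _ ha, mul_zero]

lemma max_eq_add_relu_sub (a b : ℝ) : max a b = a + relu (b - a) := by
  rw [relu, ← max_add_add_left, add_sub_cancel, add_zero, max_comm]

lemma min_eq_sub_relu_sub (a b : ℝ) : min a b = b - relu (b - a) := by
  rw [relu]; rcases le_total a b with hab | hab <;> simp [hab]

lemma entrywise_relu_smul {n : ℕ} {a : ℝ} (ha : 0 ≤ a) (x : EuclideanSpace ℝ (Fin n)) :
    entrywise relu (a • x) = a • entrywise relu x := by
  ext i
  exact relu_mul_of_nonneg ha (x i)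

section MatVec

variable {k n : ℕ} (W : Matrix (Fin k) (Fin n) ℝ)

lemma matVec_apply (x : EuclideanSpace ℝ (Fin n)) (i : Fin k) :
    matVec W x i = ∑ j, W i j * x j := rfl

lemma smul_matVec (a : ℝ) (x : EuclideanSpace ℝ (Fin n)) : matVec (a • W) x = a • matVec W x := by
  simp [matVec]

lemma matVec_smul (a : ℝ) (x : EuclideanSpace ℝ (Fin n)) : matVec W (a • x) = a • matVec W x :=
  map_smul _ a x

lemma specNorm_le_one_iff : specNorm W ≤ 1 ↔ ∀ x, ‖matVec W x‖ ≤ ‖x‖ := by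
  simp only [specNorm, ContinuousLinearMap.opNorm_le_iff zero_le_one, one_mul]
  rfl

lemma specNorm_smul_le_one {a : ℝ} (ha₀ : 0 ≤ a) (ha₁ : a ≤ 1) (hW : specNorm W ≤ 1) :
    specNorm (a • W) ≤ 1 := by
  rw [specNorm_le_one_iff] at hW ⊢
  intro x
  rw [smul_matVec, norm_smul, Real.norm_of_nonneg ha₀]
  exact (mul_le_mul ha₁ (hW x) (norm_nonneg _) zero_le_one).trans_eq (one_mul _)

lemma eulerStep_eq_step_two_sqrt_smul (b : EuclideanSpace ℝ (Fin k)) {τ : ℝ} (hτ : 0 ≤ τ)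
    (y : EuclideanSpace ℝ (Fin n)) :
    y - τ • matVec Wᵀ (entrywise relu (matVec W y + b)) =
      y - (2 : ℝ) • matVec (√(τ / 2) • W)ᵀ
        (entrywise relu (matVec (√(τ / 2) • W) y + √(τ / 2) • b)) := by
  have hs : 2 * √(τ / 2) * √(τ / 2) = τ := by
    rw [mul_assoc, Real.mul_self_sqrt (by positivity)]; ring
  rw [transpose_smul, smul_matVec, smul_matVec, ← smul_add,
    entrywise_relu_smul (Real.sqrt_nonneg _), matVec_smul, smul_smul, smul_smul, hs]

end MatVec

section FinAddThree

variable {n : ℕ}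

def cons3 (a b c : ℝ) (v : EuclideanSpace ℝ (Fin n)) : EuclideanSpace ℝ (Fin (n + 3)) :=
  WithLp.toLp 2 (vecCons a (vecCons b (vecCons c v)))

def tail3 (x : EuclideanSpace ℝ (Fin (n + 3))) : EuclideanSpace ℝ (Fin n) :=
  WithLp.toLp 2 fun i => x i.succ.succ.succ

@[simp] lemma cons3_apply_zero (a b c : ℝ) (v : EuclideanSpace ℝ (Fin n)) :
    cons3 a b c v 0 = a := rfl
@[simp] lemma cons3_apply_one (a b c : ℝ) (v : EuclideanSpace ℝ (Fin n)) :
    cons3 a b c v 1 = b := rfl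
@[simp] lemma cons3_apply_two (a b c : ℝ) (v : EuclideanSpace ℝ (Fin n)) :
    cons3 a b c v 2 = c := rfl
@[simp] lemma cons3_apply_succ_succ_succ (a b c : ℝ) (v : EuclideanSpace ℝ (Fin n))
    (i : Fin n) : cons3 a b c v i.succ.succ.succ = v i := rfl

@[simp] lemma tail3_apply (x : EuclideanSpace ℝ (Fin (n + 3))) (i : Fin n) :
    tail3 x i = x i.succ.succ.succ := rfl

@[simp] lemma tail3_cons3 (a b c : ℝ) (v : EuclideanSpace ℝ (Fin n)) :
    tail3 (cons3 a b c v) = v := rfl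

lemma ext_fin_add_three {x y : EuclideanSpace ℝ (Fin (n + 3))} (h0 : x 0 = y 0) (h1 : x 1 = y 1)
    (h2 : x 2 = y 2) (ht : ∀ i : Fin n, x i.succ.succ.succ = y i.succ.succ.succ) : x = y := by
  ext j
  refine Fin.cases h0 (Fin.cases h1 (Fin.cases h2 ht)) j

lemma sum_fin_add_three (f : Fin (n + 3) → ℝ) :
    ∑ j, f j = f 0 + f 1 + f 2 + ∑ i : Fin n, f i.succ.succ.succ := by
  simp only [Fin.sum_univ_succ, Fin.succ_zero_eq_one, Fin.succ_one_eq_two]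
  ring

lemma norm_sq_fin_add_three (x : EuclideanSpace ℝ (Fin (n + 3))) :
    ‖x‖ ^ 2 = x 0 ^ 2 + x 1 ^ 2 + x 2 ^ 2 + ‖tail3 x‖ ^ 2 := by
  simp only [EuclideanSpace.norm_sq_eq, sum_fin_add_three, Real.norm_eq_abs, sq_abs, tail3_apply]

lemma cons3_add (a b c a' b' c' : ℝ) (v v' : EuclideanSpace ℝ (Fin n)) :
    cons3 a b c v + cons3 a' b' c' v' = cons3 (a + a') (b + b') (c + c') (v + v') :=
  ext_fin_add_three rfl rfl rfl fun _ => rfl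

lemma entrywise_cons3 (σ : ℝ → ℝ) (a b c : ℝ) (v : EuclideanSpace ℝ (Fin n)) :
    entrywise σ (cons3 a b c v) = cons3 (σ a) (σ b) (σ c) (entrywise σ v) :=
  ext_fin_add_three rfl rfl rfl fun _ => rfl

section TildeLayer

variable (Φ : EuclideanSpace ℝ (Fin n) → EuclideanSpace ℝ (Fin n))
  (x : EuclideanSpace ℝ (Fin (n + 3)))

@[simp] lemma tildeLayer_apply_zero : tildeLayer Φ x 0 = max (x 0) (x 1) := rfl
@[simp] lemma tildeLayer_apply_one : tildeLayer Φ x 1 = min (x 0) (x 1) := rfl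
@[simp] lemma tildeLayer_apply_two : tildeLayer Φ x 2 = x 2 := rfl
@[simp] lemma tildeLayer_apply_succ_succ_succ (i : Fin n) :
    tildeLayer Φ x i.succ.succ.succ = Φ (tail3 x) i := rfl

end TildeLayer

end FinAddThree

noncomputable def sortingExtension {k n : ℕ} (V : Matrix (Fin k) (Fin n) ℝ) :
    Matrix (Fin (k + 3)) (Fin (n + 3)) ℝ :=
  Matrix.of (vecCons (vecCons (-(√2)⁻¹) (vecCons (√2)⁻¹ 0))
    (vecCons 0 (vecCons 0 fun i => vecCons 0 (vecCons 0 (vecCons 0 (V i))))))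

section SortingExtension

variable {k n : ℕ} (V : Matrix (Fin k) (Fin n) ℝ)

lemma matVec_sortingExtension (x : EuclideanSpace ℝ (Fin (n + 3))) :
    matVec (sortingExtension V) x = cons3 ((√2)⁻¹ * (x 1 - x 0)) 0 0 (matVec V (tail3 x)) := by
  refine ext_fin_add_three ?_ ?_ ?_ fun i => ?_ <;>
    simp [matVec_apply, sum_fin_add_three, sortingExtension]
  ring

lemma matVec_transpose_sortingExtension (u : EuclideanSpace ℝ (Fin (k + 3))) :
    matVec (sortingExtension V)ᵀ u =
      cons3 (-((√2)⁻¹ * u 0)) ((√2)⁻¹ * u 0) 0 (matVec Vᵀ (tail3 u)) := by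
  refine ext_fin_add_three ?_ ?_ ?_ fun i => ?_ <;>
    simp [matVec_apply, sum_fin_add_three, sortingExtension]

lemma specNorm_sortingExtension_le_one {V : Matrix (Fin k) (Fin n) ℝ} (hV : specNorm V ≤ 1) :
    specNorm (sortingExtension V) ≤ 1 := by
  rw [specNorm_le_one_iff] at hV ⊢
  intro x
  have hc : (√2)⁻¹ ^ 2 = (1 / 2 : ℝ) := by rw [inv_pow, Real.sq_sqrt zero_le_two, one_div]
  have htail := pow_le_pow_left₀ (norm_nonneg _) (hV (tail3 x)) 2
  refine (sq_le_sq₀ (norm_nonneg _) (norm_nonneg _)).1 ?_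
  rw [matVec_sortingExtension, norm_sq_fin_add_three, norm_sq_fin_add_three x]
  simp only [cons3_apply_zero, cons3_apply_one, cons3_apply_two, tail3_cons3, mul_pow, hc]
  nlinarith [sq_nonneg (x 0 + x 1), sq_nonneg (x 2)]

lemma tildeLayer_eq_sortingExtension_step (β : EuclideanSpace ℝ (Fin k))
    (x : EuclideanSpace ℝ (Fin (n + 3))) :
    tildeLayer (fun y => y - (2 : ℝ) • matVec Vᵀ (entrywise relu (matVec V y + β))) x =
      x - (2 : ℝ) • matVec (sortingExtension V)ᵀ
        (entrywise relu (matVec (sortingExtension V) x + cons3 0 0 0 β)) := by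
  have hrelu (t : ℝ) : 2 * ((√2)⁻¹ * relu ((√2)⁻¹ * t)) = relu t := by
    have hc : (√2)⁻¹ * (√2)⁻¹ = (1 / 2 : ℝ) := by
      rw [← mul_inv, Real.mul_self_sqrt zero_le_two, one_div]
    rw [relu_mul_of_nonneg (by positivity)]
    linear_combination 2 * relu t * hc
  rw [matVec_sortingExtension, cons3_add, entrywise_cons3, matVec_transpose_sortingExtension]
  refine ext_fin_add_three ?_ ?_ ?_ fun i => ?_ <;>
    simp [hrelu, max_eq_add_relu_sub, min_eq_sub_relu_sub]

end SortingExtension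

/-- Every map in `Ẽ_{h,ReLU}` — i.e. `(max{x₁,x₂}, min{x₁,x₂}, x₃, Φ̃(x₄,…))`
with `Φ̃(y) = y - τ W̃ᵀ ReLU(W̃y + b̃)`, `‖W̃‖₂ ≤ 1`, `τ ∈ [0,2]` — can be written as
`x ↦ x - 2 Wᵀ ReLU(Wx + b)` with `‖W‖₂ ≤ 1`; in particular `Ẽ_{h,ReLU} ⊆ E_{h+3,ReLU}`. -/
theorem stmt9 (h h' : ℕ) (Wt : Matrix (Fin h') (Fin h) ℝ) (hWt : specNorm Wt ≤ 1)
    (bt : EuclideanSpace ℝ (Fin h')) (τ : ℝ) (hτ0 : 0 ≤ τ) (hτ2 : τ ≤ 2) :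
    (∃ (W : Matrix (Fin (h' + 3)) (Fin (h + 3)) ℝ) (b : EuclideanSpace ℝ (Fin (h' + 3))),
      specNorm W ≤ 1 ∧
      ∀ x : EuclideanSpace ℝ (Fin (h + 3)),
        tildeLayer (fun y => y - τ • matVec Wt.transpose (entrywise relu (matVec Wt y + bt))) x =
          x - (2 : ℝ) • matVec W.transpose (entrywise relu (matVec W x + b))) ∧
    IsEulerStep
      (tildeLayer (fun y => y - τ • matVec Wt.transpose (entrywise relu (matVec Wt y + bt)))) := by
  set s := √(τ / 2)
  have hs : s ≤ 1 := Real.sqrt_le_one.mpr (by linarith)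
  set W := sortingExtension (s • Wt)
  set b := cons3 0 0 0 (s • bt)
  have hW : specNorm W ≤ 1 :=
    specNorm_sortingExtension_le_one (specNorm_smul_le_one Wt (Real.sqrt_nonneg _) hs hWt)
  have hΦ (x : EuclideanSpace ℝ (Fin (h + 3))) :
      tildeLayer (fun y => y - τ • matVec Wt.transpose (entrywise relu (matVec Wt y + bt))) x =
        x - (2 : ℝ) • matVec W.transpose (entrywise relu (matVec W x + b)) := by
    simp_rw [eulerStep_eq_step_two_sqrt_smul Wt bt hτ0]
    exact tildeLayer_eq_sortingExtension_step _ _ x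
  exact ⟨⟨W, b, hW, hΦ⟩, h' + 3, W, b, 2, zero_le_two, le_rfl, hW, hΦ⟩
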